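/- Let E : ℝⁿ → ℝ be twice continuously differentiable with gradient g, let U ⊆ ℝⁿ be an open corridor for E, let h > 0 be a learning rate and β ∈ (0,1) a momentum decay rate. Define the heavy-ball momentum iterates by v₀ = 0, v_t = β v_{t-1} - h • g(θ_{t-1}), θ_t = θ_{t-1} + v_t, starting at θ₀ ∈ U. If all iterates θ₀, …, θ_T and the segments between consecutive iterates remain in U, then for every t ≤ T: v_t = -h (1 - β^t)/(1 - β) • g(θ₀) and θ_t = θ₀ - (h/(1 - β)) (∑_{i=1}^{t} (1 - β^i)) • g(θ₀). -/

import Mathlib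

/-!
Since `∇E` is `C¹`, Picard–Lindelöf gives a gradient-flow line through any `y ∈ U`; in a corridor
it is a straight line, whose velocity must then be `-∇E y` at every time. Hence `∇E` is constant
near `y` along the ray `y - t ∇E y`, and by connectedness of `[0, 1]` it is constant along any
segment `[x, x + c ∇E x]` contained in `U`. Every heavy-ball step from `θ₀` is a multiple of
`∇E θ₀`, so inductively all iterates see the gradient `∇E θ₀`, and the momentum recursion with a
constant gradient is solved in closed form.
-/

/-- An open set `U ⊆ ℝⁿ` is a *corridor* for `E` if every solution of the gradient flow
`θ'(t) = -∇E(θ(t))` whose image lies in `U` is a straight line traveled at constant speed,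
i.e. satisfies `θ(t) = θ(a) + (t - a) • v` for some fixed vector `v`. -/
def IsCorridor {n : ℕ} (E : EuclideanSpace ℝ (Fin n) → ℝ)
    (U : Set (EuclideanSpace ℝ (Fin n))) : Prop :=
  ∀ (a b : ℝ), a ≤ b → ∀ θ : ℝ → EuclideanSpace ℝ (Fin n),
    (∀ t ∈ Set.Icc a b, HasDerivAt θ (-(gradient E (θ t))) t) →
    (∀ t ∈ Set.Icc a b, θ t ∈ U) →
    ∃ v : EuclideanSpace ℝ (Fin n), ∀ t ∈ Set.Icc a b, θ t = θ a + (t - a) • v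

open Set Filter Topology InnerProductSpace

theorem ContDiff.gradient {F : Type*} [NormedAddCommGroup F] [InnerProductSpace ℝ F]
    [CompleteSpace F] {f : F → ℝ} {m k : WithTop ℕ∞} (hf : ContDiff ℝ k f) (hmk : m + 1 ≤ k) :
    ContDiff ℝ m (gradient f) :=
  (toDual ℝ F).symm.contDiff.comp (hf.fderiv_right hmk)

namespace IsCorridor

variable {n : ℕ} {E : EuclideanSpace ℝ (Fin n) → ℝ} {U : Set (EuclideanSpace ℝ (Fin n))}

theorem flow_eq_line (hcor : IsCorridor E U) {θ : ℝ → EuclideanSpace ℝ (Fin n)} {a b t₀ t : ℝ}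
    (hflow : ∀ s ∈ Icc a b, HasDerivAt θ (-gradient E (θ s)) s)
    (hθU : ∀ s ∈ Icc a b, θ s ∈ U) (ht₀ : t₀ ∈ Ioo a b) (ht : t ∈ Ioo a b) :
    θ t = θ t₀ - (t - t₀) • gradient E (θ t₀) ∧ gradient E (θ t) = gradient E (θ t₀) := by
  obtain ⟨v, hv⟩ := hcor a b (ht₀.1.le.trans ht₀.2.le) θ hflow hθU
  have hgrad : ∀ s ∈ Ioo a b, gradient E (θ s) = -v := by
    intro s hs
    have hline : HasDerivAt (fun r => θ a + (r - a) • v) v s := by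
      simpa using (((hasDerivAt_id s).sub_const a).smul_const v).const_add (θ a)
    have hvel := (hflow s (Ioo_subset_Icc_self hs)).unique
      (hline.congr_of_eventuallyEq (eventually_of_mem (Icc_mem_nhds hs.1 hs.2) hv))
    rw [← hvel, neg_neg]
  refine ⟨?_, by rw [hgrad t ht, hgrad t₀ ht₀]⟩
  rw [hgrad t₀ ht₀, hv t (Ioo_subset_Icc_self ht), hv t₀ (Ioo_subset_Icc_self ht₀)]
  module

theorem eventually_gradient_sub_smul_gradient_eq (hcor : IsCorridor E U) (hE : ContDiff ℝ 2 E)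
    (hU : IsOpen U) {y : EuclideanSpace ℝ (Fin n)} (hy : y ∈ U) :
    ∀ᶠ t in 𝓝 (0 : ℝ), gradient E (y - t • gradient E y) = gradient E y := by
  obtain ⟨θ, hθ0, ε, hε, hflow⟩ := ((hE.gradient (by norm_num)).neg.contDiffAt (x := y))
    |>.exists_forall_mem_closedBall_exists_eq_forall_mem_Ioo_hasDerivAt₀ 0
  have hgood : ∀ᶠ s in 𝓝 (0 : ℝ), HasDerivAt θ (-gradient E (θ s)) s ∧ θ s ∈ U :=
    (eventually_of_mem (Ioo_mem_nhds (by linarith) (by linarith)) hflow).and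
      ((hflow 0 ⟨by linarith, by linarith⟩).continuousAt.preimage_mem_nhds
        (hU.mem_nhds (hθ0 ▸ hy)))
  obtain ⟨a, b, -, hnhds, hsub⟩ := exists_Icc_mem_subset_of_mem_nhds hgood
  have hIoo : Ioo a b ∈ 𝓝 (0 : ℝ) := interior_Icc (a := a) ▸ interior_mem_nhds.2 hnhds
  filter_upwards [hIoo] with t ht
  obtain ⟨hline, hgrad⟩ := hcor.flow_eq_line (fun s hs => (hsub hs).1) (fun s hs => (hsub hs).2)
    (mem_of_mem_nhds hIoo) ht
  simp only [hθ0, sub_zero] at hline hgrad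
  rwa [← hline]

theorem gradient_eq_of_segment_subset (hcor : IsCorridor E U) (hE : ContDiff ℝ 2 E)
    (hU : IsOpen U) {x y : EuclideanSpace ℝ (Fin n)} {c : ℝ} (hxy : y - x = c • gradient E x)
    (hseg : segment ℝ x y ⊆ U) : gradient E y = gradient E x := by
  set w := gradient E x
  set p : ℝ → EuclideanSpace ℝ (Fin n) := fun s => x + s • (y - x) with hp_def
  have hp : Continuous p := by fun_prop
  have hpU : ∀ s ∈ Icc (0 : ℝ) 1, p s ∈ U := by
    rw [segment_eq_image'] at hseg
    exact image_subset_iff.1 hseg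
  set S := {s | p s ∈ U ∧ gradient E (p s) = w}
  have hS : IsOpen S := by
    refine isOpen_iff_mem_nhds.2 fun s₀ ⟨hs₀U, hs₀w⟩ => ?_
    have hdir : Tendsto (fun s => (s₀ - s) * c) (𝓝 s₀) (𝓝 0) := by
      exact (show Continuous fun s : ℝ => (s₀ - s) * c by fun_prop).tendsto' s₀ 0 (by simp)
    have hline : ∀ s, p s₀ - ((s₀ - s) * c) • w = p s := fun s => by
      simp only [hp_def, hxy]
      module
    filter_upwards [hp.continuousAt.preimage_mem_nhds (hU.mem_nhds hs₀U),
      hdir.eventually (hcor.eventually_gradient_sub_smul_gradient_eq hE hU hs₀U)] with s hsU hsw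
    rw [hs₀w, hline] at hsw
    exact ⟨hsU, hsw⟩
  have hS_closure : closure S ⊆ {s | gradient E (p s) = w} :=
    closure_minimal (fun s hs => hs.2)
      (isClosed_eq ((hE.gradient (m := 1) (by norm_num)).continuous.comp hp) continuous_const)
  have hIcc : Icc (0 : ℝ) 1 ⊆ S :=
    isPreconnected_Icc.subset_of_closure_inter_subset hS
      ⟨0, left_mem_Icc.2 zero_le_one, hpU 0 (left_mem_Icc.2 zero_le_one), by simp [p, w]⟩
      fun s ⟨hsS, hs⟩ => ⟨hpU s hs, hS_closure hsS⟩
  simpa [p] using (hIcc (right_mem_Icc.2 zero_le_one)).2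

end IsCorridor

section HeavyBall

variable {V : Type*} [AddCommGroup V] [Module ℝ V] {h β : ℝ} {g : V} {v θ : ℕ → V} {T : ℕ}

theorem momentum_eq_of_gradient_const (hβ : β ≠ 1) (hv0 : v 0 = 0)
    (hv : ∀ t < T, v (t + 1) = β • v t - h • g) :
    ∀ t ≤ T, v t = -(h * (1 - β ^ t) / (1 - β)) • g := by
  have hβ' : 1 - β ≠ 0 := sub_ne_zero.2 hβ.symm
  intro t
  induction t with
  | zero => simp [hv0]
  | succ t ih =>
    intro ht
    rw [hv t ht, ih (by omega), smul_smul, ← sub_smul]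
    congr 1
    field_simp
    ring

theorem position_eq_of_gradient_const (hβ : β ≠ 1) (hv0 : v 0 = 0)
    (hv : ∀ t < T, v (t + 1) = β • v t - h • g) (hθ : ∀ t < T, θ (t + 1) = θ t + v (t + 1)) :
    ∀ t ≤ T, θ t = θ 0 - (h / (1 - β) * ∑ i ∈ Finset.Icc 1 t, (1 - β ^ i)) • g := by
  intro t
  induction t with
  | zero => simp
  | succ t ih =>
    intro ht
    rw [hθ t ht, ih (by omega), momentum_eq_of_gradient_const hβ hv0 hv (t + 1) ht,
      Finset.sum_Icc_succ_top (by omega)]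
    module

end HeavyBall

theorem momentum_in_corridor_general {n : ℕ}
    (E : EuclideanSpace ℝ (Fin n) → ℝ) (hE : ContDiff ℝ 2 E)
    (U : Set (EuclideanSpace ℝ (Fin n))) (hU : IsOpen U) (hcor : IsCorridor E U)
    (h β : ℝ) (hβ : β ∈ Set.Ioo (0 : ℝ) 1)
    (θ₀ : EuclideanSpace ℝ (Fin n))
    (v θs : ℕ → EuclideanSpace ℝ (Fin n))
    (hv0 : v 0 = 0) (hθs0 : θs 0 = θ₀)
    (hv : ∀ t : ℕ, v (t + 1) = β • v t - h • gradient E (θs t))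
    (hθs : ∀ t : ℕ, θs (t + 1) = θs t + v (t + 1))
    (T : ℕ)
    (hseg : ∀ t < T, ∀ s ∈ Set.Icc (0 : ℝ) 1, θs t + s • (θs (t + 1) - θs t) ∈ U) :
    ∀ t ≤ T,
      v t = -(h * (1 - β ^ t) / (1 - β)) • gradient E θ₀ ∧
      θs t = θ₀ - (h / (1 - β) * ∑ i ∈ Finset.Icc 1 t, (1 - β ^ i)) • gradient E θ₀ := by
  have hgrad : ∀ t ≤ T, gradient E (θs t) = gradient E θ₀ ∧ ∃ c : ℝ, v t = c • gradient E θ₀ := by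
    intro t
    induction t with
    | zero => exact fun _ => ⟨by rw [hθs0], 0, by rw [hv0, zero_smul]⟩
    | succ t ih =>
      intro ht
      obtain ⟨hgt, c, hc⟩ := ih (by omega)
      have hstep : v (t + 1) = (β * c - h) • gradient E (θs t) := by
        rw [hv, hc, hgt, sub_smul, smul_smul]
      refine ⟨?_, β * c - h, by rw [hstep, hgt]⟩
      rw [← hgt]
      refine hcor.gradient_eq_of_segment_subset hE hU (by rw [hθs, hstep, add_sub_cancel_left]) ?_
      rw [segment_eq_image']
      exact image_subset_iff.2 (hseg t (by omega))
  have hv' : ∀ t < T, v (t + 1) = β • v t - h • gradient E θ₀ := fun t ht => by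
    rw [hv, (hgrad t ht.le).1]
  intro t ht
  exact ⟨momentum_eq_of_gradient_const hβ.2.ne hv0 hv' t ht,
    hθs0 ▸ position_eq_of_gradient_const hβ.2.ne hv0 hv' (fun t _ => hθs t) t ht⟩

/-- **Momentum in corridors, Lemma A.1.** Let `U` be an open corridor for
`E`, `h > 0` a learning rate and `β ∈ (0,1)` a momentum decay rate. Define the heavy-ball
momentum iterates `v₀ = 0`, `v_t = β v_{t-1} - h • g(θ_{t-1})`, `θ_t = θ_{t-1} + v_t`,
starting at `θ₀ ∈ U`. If all iterates `θ₀, …, θ_T` and the segments between consecutive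
iterates remain in `U`, then for every `t ≤ T`:
`v_t = -h (1 - β^t)/(1 - β) • g(θ₀)` and
`θ_t = θ₀ - (h/(1 - β)) (∑_{i=1}^{t} (1 - β^i)) • g(θ₀)`. -/
theorem momentum_in_corridor {n : ℕ}
    (E : EuclideanSpace ℝ (Fin n) → ℝ) (hE : ContDiff ℝ 2 E)
    (U : Set (EuclideanSpace ℝ (Fin n))) (hU : IsOpen U) (hcor : IsCorridor E U)
    (h β : ℝ) (hh : 0 < h) (hβ : β ∈ Set.Ioo (0 : ℝ) 1)
    (θ₀ : EuclideanSpace ℝ (Fin n)) (hθ₀ : θ₀ ∈ U)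
    (v θs : ℕ → EuclideanSpace ℝ (Fin n))
    (hv0 : v 0 = 0) (hθs0 : θs 0 = θ₀)
    (hv : ∀ t : ℕ, v (t + 1) = β • v t - h • gradient E (θs t))
    (hθs : ∀ t : ℕ, θs (t + 1) = θs t + v (t + 1))
    (T : ℕ)
    (hmem : ∀ t ≤ T, θs t ∈ U)
    (hseg : ∀ t < T, ∀ s ∈ Set.Icc (0 : ℝ) 1, θs t + s • (θs (t + 1) - θs t) ∈ U) :
    ∀ t ≤ T,
      v t = -(h * (1 - β ^ t) / (1 - β)) • gradient E θ₀ ∧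
      θs t = θ₀ - (h / (1 - β) * ∑ i ∈ Finset.Icc 1 t, (1 - β ^ i)) • gradient E θ₀ :=
  momentum_in_corridor_general E hE U hU hcor h β hβ θ₀ v θs hv0 hθs0 hv hθs T hseg
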